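/- For any non-decreasing Boolean function f : {0,1}^n → {0,1}, P(f = 1) ≤ 2·exp(−(1/2)·Σ_{i=1}^n ((1−p)·P(i ∈ P(f) | f=1))²). -/

import Mathlib

open Finset Real

/-- The Bernoulli(p) product weight of a configuration `ω ∈ {0,1}^n`. -/
def W (n : ℕ) (p : ℝ) (ω : Fin n → Bool) : ℝ :=
  ∏ i, if ω i then p else 1 - p

/-- Expectation of `g` under the Bernoulli(p) product measure on `{0,1}^n`. -/
def Ex (n : ℕ) (p : ℝ) (g : (Fin n → Bool) → ℝ) : ℝ :=
  ∑ ω : Fin n → Bool, g ω * W n p ω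

/-- `ω` with its `i`-th coordinate set to `1`. -/
def up1 {n : ℕ} (ω : Fin n → Bool) (i : Fin n) : Fin n → Bool :=
  Function.update ω i true

/-- `ω` with its `i`-th coordinate set to `0`. -/
def up0 {n : ℕ} (ω : Fin n → Bool) (i : Fin n) : Fin n → Bool :=
  Function.update ω i false

/-- The random variable `X i (ω) = ω(i)/p − (1−ω(i))/(1−p)`. -/
noncomputable def X (n : ℕ) (p : ℝ) (i : Fin n) (ω : Fin n → Bool) : ℝ :=
  (if ω i then (1:ℝ) else 0) / p - (1 - if ω i then (1:ℝ) else 0) / (1 - p)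

/-- `S_n = X_1 + ⋯ + X_n`. -/
noncomputable def Sn (n : ℕ) (p : ℝ) (ω : Fin n → Bool) : ℝ :=
  ∑ i, X n p i ω

/-- The set of pivotal coordinates of `f` at `ω`. -/
def pivSet {n : ℕ} (f : (Fin n → Bool) → Bool) (ω : Fin n → Bool) : Finset (Fin n) :=
  Finset.univ.filter fun i => f (up1 ω i) ≠ f (up0 ω i)

/-- The real value of a Boolean function. -/
def fval {n : ℕ} (f : (Fin n → Bool) → Bool) (ω : Fin n → Bool) : ℝ :=
  if f ω then 1 else 0

/-- Probability of an event under the Bernoulli(p) product measure. -/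
def Pr (n : ℕ) (p : ℝ) (A : (Fin n → Bool) → Prop) [DecidablePred A] : ℝ :=
  ∑ ω ∈ Finset.univ.filter A, W n p ω

/-- `f` is non-decreasing. -/
def Mono {n : ℕ} (f : (Fin n → Bool) → Bool) : Prop :=
  ∀ (ω : Fin n → Bool) (i : Fin n), f (up0 ω i) ≤ f (up1 ω i)

/-! Write `q = P(f = 1)`, `a i = (1 - p) P(i ∈ P(f) | f = 1)` and `T ω = ∑ i, a i (ω i - p)`.
Resampling the `i`-th coordinate gives `E[(ω i - p) f] = (1 - p) P(i ∈ P(f), f = 1)` for monotone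
`f`, hence `E[f T] = M q` with `M = ∑ i, a i ^ 2`. Jensen's inequality for the tilted measure
`f dP / q` then gives `q e^M ≤ E[f e^T] ≤ E[e^T]`, and by independence, since `0 ≤ a i ≤ 1`,
`E[e^T] = ∏ i, E[e^{a i (ω i - p)}] ≤ e^{M / 2}`. So `q ≤ e^{-M/2}`. -/

section

variable {n : ℕ} {p : ℝ}

-- `centered p (ω i) = p * (1 - p) * X n p i ω`
def centered (p : ℝ) (b : Bool) : ℝ := (if b then 1 else 0) - p

@[simp] lemma centered_true (p : ℝ) : centered p true = 1 - p := by simp [centered]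

@[simp] lemma centered_false (p : ℝ) : centered p false = -p := by simp [centered]

lemma W_nonneg (hp0 : 0 ≤ p) (hp1 : p ≤ 1) (ω : Fin n → Bool) : 0 ≤ W n p ω :=
  prod_nonneg fun i _ => by split <;> linarith

lemma W_update (ω : Fin n → Bool) (i : Fin n) (b : Bool) :
    W n p (Function.update ω i b) =
      (if b then p else 1 - p) * ∏ j ∈ {i}ᶜ, (if ω j then p else 1 - p) := by
  rw [W, Fintype.prod_eq_mul_prod_compl i, Function.update_self]
  congr 1
  exact prod_congr rfl fun j hj => by
    rw [Function.update_of_ne (by simpa using hj)]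

lemma Ex_mono (hp0 : 0 ≤ p) (hp1 : p ≤ 1) {g h : (Fin n → Bool) → ℝ} (hgh : ∀ ω, g ω ≤ h ω) :
    Ex n p g ≤ Ex n p h :=
  sum_le_sum fun ω _ => mul_le_mul_of_nonneg_right (hgh ω) (W_nonneg hp0 hp1 ω)

lemma Pr_eq_Ex (A : (Fin n → Bool) → Prop) [DecidablePred A] :
    Pr n p A = Ex n p (fun ω => if A ω then 1 else 0) := by
  simp [Pr, Ex, sum_filter]

lemma Pr_nonneg (hp0 : 0 ≤ p) (hp1 : p ≤ 1) (A : (Fin n → Bool) → Prop) [DecidablePred A] :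
    0 ≤ Pr n p A :=
  sum_nonneg fun ω _ => W_nonneg hp0 hp1 ω

lemma Pr_mono (hp0 : 0 ≤ p) (hp1 : p ≤ 1) {A B : (Fin n → Bool) → Prop} [DecidablePred A]
    [DecidablePred B] (hAB : ∀ ω, A ω → B ω) : Pr n p A ≤ Pr n p B :=
  sum_le_sum_of_subset_of_nonneg (monotone_filter_right _ fun ω _ => hAB ω) fun ω _ _ =>
    W_nonneg hp0 hp1 ω

lemma Ex_prod (p : ℝ) (g : Fin n → Bool → ℝ) :
    Ex n p (fun ω => ∏ i, g i (ω i)) = ∏ i, (p * g i true + (1 - p) * g i false) := by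
  simp_rw [Ex, W, ← prod_mul_distrib]
  rw [← Fintype.prod_sum fun i (b : Bool) => g i b * if b then p else 1 - p]
  simp [mul_comm]

lemma two_point_mgf_le {a : ℝ} (hp0 : 0 ≤ p) (hp1 : p ≤ 1) (ha : |a| ≤ 1) :
    p * exp (a * (1 - p)) + (1 - p) * exp (a * -p) ≤ exp (a ^ 2 / 2) := by
  have exp_le {x : ℝ} (hx : |x| ≤ 1) : exp x ≤ 1 + x + x ^ 2 := by
    linarith [(abs_le.1 (abs_exp_sub_one_sub_id_le hx)).2]
  have h1 : |a * (1 - p)| ≤ 1 := by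
    rw [abs_mul, abs_of_nonneg (by linarith : 0 ≤ 1 - p)]
    nlinarith [abs_nonneg a]
  have h2 : |a * -p| ≤ 1 := by
    rw [abs_mul, abs_neg, abs_of_nonneg hp0]
    nlinarith [abs_nonneg a]
  have hvar : p * (1 - p) ≤ 1 / 2 := by nlinarith [sq_nonneg (p - 1 / 2)]
  calc p * exp (a * (1 - p)) + (1 - p) * exp (a * -p)
      ≤ p * (1 + a * (1 - p) + (a * (1 - p)) ^ 2) + (1 - p) * (1 + a * -p + (a * -p) ^ 2) := by
        gcongr ?_ * ?_ + ?_ * ?_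
        · exact exp_le h1
        · exact exp_le h2
    _ = 1 + a ^ 2 * (p * (1 - p)) := by ring
    _ ≤ a ^ 2 / 2 + 1 := by nlinarith [sq_nonneg a]
    _ ≤ exp (a ^ 2 / 2) := add_one_le_exp _

lemma Ex_exp_sum_centered_le (hp0 : 0 ≤ p) (hp1 : p ≤ 1) {a : Fin n → ℝ} (ha : ∀ i, |a i| ≤ 1) :
    Ex n p (fun ω => exp (∑ i, a i * centered p (ω i))) ≤ exp (∑ i, a i ^ 2 / 2) := by
  simp_rw [exp_sum]
  rw [Ex_prod p fun i b => exp (a i * centered p b)]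
  refine prod_le_prod (fun i _ => by positivity) fun i _ => ?_
  simpa using two_point_mgf_le hp0 hp1 (ha i)

lemma Ex_mul_exp_le (hp0 : 0 ≤ p) (hp1 : p ≤ 1) {g T : (Fin n → Bool) → ℝ} (hg : ∀ ω, 0 ≤ g ω)
    {c : ℝ} (hc : Ex n p (fun ω => g ω * T ω) = c * Ex n p g) :
    Ex n p g * exp c ≤ Ex n p (fun ω => g ω * exp (T ω)) := by
  have tangent (t : ℝ) : exp c * (1 + (t - c)) ≤ exp t := by
    calc exp c * (1 + (t - c)) ≤ exp c * exp (t - c) := by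
          gcongr; linarith [add_one_le_exp (t - c)]
      _ = exp t := by rw [← exp_add]; ring_nf
  calc Ex n p g * exp c
      = Ex n p (fun ω => g ω * (exp c * (1 + (T ω - c)))) := by
        have expand (ω : Fin n → Bool) : g ω * (exp c * (1 + (T ω - c))) * W n p ω =
            exp c * (g ω * W n p ω) + exp c * (g ω * T ω * W n p ω) - exp c * c * (g ω * W n p ω) := by
          ring
        simp only [Ex] at hc ⊢
        simp only [expand, sum_add_distrib, sum_sub_distrib, ← mul_sum, hc]
        ring
    _ ≤ Ex n p (fun ω => g ω * exp (T ω)) :=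
        Ex_mono hp0 hp1 fun ω => mul_le_mul_of_nonneg_left (tangent _) (hg ω)

lemma Ex_le_exp_of_Ex_mul_sum_centered (hp0 : 0 ≤ p) (hp1 : p ≤ 1) {g : (Fin n → Bool) → ℝ}
    (hg0 : ∀ ω, 0 ≤ g ω) (hg1 : ∀ ω, g ω ≤ 1) {a : Fin n → ℝ} (ha : ∀ i, |a i| ≤ 1)
    (hcorr : Ex n p (fun ω => g ω * ∑ i, a i * centered p (ω i)) = (∑ i, a i ^ 2) * Ex n p g) :
    Ex n p g ≤ exp (-(1 / 2) * ∑ i, a i ^ 2) := by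
  set M := ∑ i, a i ^ 2
  have key : Ex n p g * exp M ≤ exp (M / 2) :=
    calc Ex n p g * exp M
        ≤ Ex n p (fun ω => g ω * exp (∑ i, a i * centered p (ω i))) :=
          Ex_mul_exp_le hp0 hp1 hg0 hcorr
      _ ≤ Ex n p (fun ω => exp (∑ i, a i * centered p (ω i))) :=
          Ex_mono hp0 hp1 fun ω => mul_le_of_le_one_left (exp_pos _).le (hg1 ω)
      _ ≤ exp (M / 2) := by rw [sum_div]; exact Ex_exp_sum_centered_le hp0 hp1 ha
  rwa [show -(1 / 2) * M = M / 2 - M by ring, exp_sub, le_div_iff₀ (exp_pos M)]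

lemma Ex_eq_resample (i : Fin n) (F : (Fin n → Bool) → ℝ) :
    Ex n p F = Ex n p (fun ω => p * F (up1 ω i) + (1 - p) * F (up0 ω i)) := by
  -- pairing `ω` with its flip at `i`, both sides agree pair by pair
  let flip : Equiv.Perm (Fin n → Bool) :=
    Function.Involutive.toPerm (fun ω => Function.update ω i !(ω i)) fun ω => by simp
  have symmetrize (G : (Fin n → Bool) → ℝ) :
      Ex n p G = (∑ ω, (G ω * W n p ω + G (flip ω) * W n p (flip ω))) / 2 := by
    rw [sum_add_distrib, Equiv.sum_comp flip fun ω => G ω * W n p ω, Ex]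
    ring
  rw [symmetrize F, symmetrize]
  congr 1
  refine sum_congr rfl fun ω _ => ?_
  rw [show flip ω = Function.update ω i !(ω i) from rfl]
  simp only [up1, up0, Function.update_idem, W_update]
  rw [W, Fintype.prod_eq_mul_prod_compl i]
  cases h : ω i
  · have hω : Function.update ω i false = ω := by simp [← h]
    simp only [hω, Bool.not_false, Bool.false_eq_true, ↓reduceIte]
    ring
  · have hω : Function.update ω i true = ω := by simp [← h]
    simp only [hω, Bool.not_true, Bool.false_eq_true, ↓reduceIte]
    ring

lemma Ex_centered_mul (i : Fin n) (F : (Fin n → Bool) → ℝ) :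
    Ex n p (fun ω => centered p (ω i) * F ω) =
      p * (1 - p) * Ex n p (fun ω => F (up1 ω i) - F (up0 ω i)) := by
  rw [Ex_eq_resample i]
  simp only [Ex, up1, up0, Function.update_self, centered_true, centered_false, mul_sum]
  exact sum_congr rfl fun ω _ => by ring

lemma mem_pivSet_update (f : (Fin n → Bool) → Bool) (ω : Fin n → Bool) (i : Fin n) (b : Bool) :
    i ∈ pivSet f (Function.update ω i b) ↔ i ∈ pivSet f ω := by
  unfold pivSet up1 up0
  simp only [mem_filter, mem_univ, true_and, Function.update_idem]

lemma fval_nonneg (f : (Fin n → Bool) → Bool) (ω : Fin n → Bool) : 0 ≤ fval f ω := by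
  unfold fval; split <;> norm_num

lemma fval_le_one (f : (Fin n → Bool) → Bool) (ω : Fin n → Bool) : fval f ω ≤ 1 := by
  unfold fval; split <;> norm_num

lemma Mono.apply_up_of_mem_pivSet {f : (Fin n → Bool) → Bool} (hf : Mono f) {ω : Fin n → Bool}
    {i : Fin n} (h : i ∈ pivSet f ω) : f (up1 ω i) = true ∧ f (up0 ω i) = false := by
  have hne : f (up1 ω i) ≠ f (up0 ω i) := by simpa [pivSet] using h
  have hle := hf ω i
  revert hne hle
  cases f (up1 ω i) <;> cases f (up0 ω i) <;> simp

lemma Mono.fval_up1_sub_fval_up0 {f : (Fin n → Bool) → Bool} (hf : Mono f) (ω : Fin n → Bool)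
    (i : Fin n) : fval f (up1 ω i) - fval f (up0 ω i) = if i ∈ pivSet f ω then 1 else 0 := by
  by_cases h : i ∈ pivSet f ω
  · simp [fval, h, hf.apply_up_of_mem_pivSet h]
  · have : f (up1 ω i) = f (up0 ω i) := by simpa [pivSet] using h
    simp [fval, h, this]

lemma Mono.Pr_mem_pivSet_and {f : (Fin n → Bool) → Bool} (hf : Mono f) (i : Fin n) :
    Pr n p (fun ω => i ∈ pivSet f ω ∧ f ω = true) =
      p * Ex n p (fun ω => if i ∈ pivSet f ω then 1 else 0) := by
  rw [Pr_eq_Ex, Ex_eq_resample i]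
  simp only [Ex, mul_sum]
  refine sum_congr rfl fun ω _ => ?_
  by_cases h : i ∈ pivSet f ω
  · obtain ⟨h1, h0⟩ := hf.apply_up_of_mem_pivSet h
    simp only [up1, up0] at h1 h0
    simp [up1, up0, mem_pivSet_update, h, h1, h0]
  · simp [up1, up0, mem_pivSet_update, h]

lemma Mono.Ex_centered_mul_fval {f : (Fin n → Bool) → Bool} (hf : Mono f) (i : Fin n) :
    Ex n p (fun ω => centered p (ω i) * fval f ω) =
      (1 - p) * Pr n p (fun ω => i ∈ pivSet f ω ∧ f ω = true) := by
  simp only [Ex_centered_mul, hf.fval_up1_sub_fval_up0, hf.Pr_mem_pivSet_and]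
  ring

lemma Mono.Ex_fval_mul_sum_centered {f : (Fin n → Bool) → Bool} (hf : Mono f) (a : Fin n → ℝ) :
    Ex n p (fun ω => fval f ω * ∑ i, a i * centered p (ω i)) =
      ∑ i, a i * ((1 - p) * Pr n p (fun ω => i ∈ pivSet f ω ∧ f ω = true)) := by
  simp only [← hf.Ex_centered_mul_fval, Ex, mul_sum, sum_mul]
  rw [sum_comm]
  exact sum_congr rfl fun i _ => sum_congr rfl fun ω _ => by ring

end

theorem stmt19_general (n : ℕ) (p : ℝ) (hp0 : 0 < p) (hp1 : p < 1)
    (f : (Fin n → Bool) → Bool) (hf : Mono f) :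
    Pr n p (fun ω => f ω = true) ≤
      2 * Real.exp (-(1 / 2) *
        ∑ i : Fin n,
          ((1 - p) *
            (Pr n p (fun ω => i ∈ pivSet f ω ∧ f ω = true) /
              Pr n p (fun ω => f ω = true))) ^ 2) := by
  set q := Pr n p (fun ω => f ω = true)
  set P : Fin n → ℝ := fun i => Pr n p (fun ω => i ∈ pivSet f ω ∧ f ω = true)
  set a : Fin n → ℝ := fun i => (1 - p) * (P i / q)
  have hP (i : Fin n) : 0 ≤ P i ∧ P i ≤ q :=
    ⟨Pr_nonneg hp0.le hp1.le _, Pr_mono hp0.le hp1.le fun _ h => h.2⟩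
  have ha (i : Fin n) : |a i| ≤ 1 := by
    have hq0 : 0 ≤ q := Pr_nonneg hp0.le hp1.le _
    have hratio : 0 ≤ P i / q ∧ P i / q ≤ 1 :=
      ⟨div_nonneg (hP i).1 hq0, div_le_one_of_le₀ (hP i).2 hq0⟩
    rw [abs_of_nonneg (mul_nonneg (by linarith) hratio.1)]
    exact mul_le_one₀ (by linarith) hratio.1 hratio.2
  -- `P i / q * q = P i` also when `q = 0`, since then `P i = 0`
  have hPq (i : Fin n) : (1 - p) * P i = a i * q := by
    rw [mul_assoc, div_mul_cancel_of_imp fun h => le_antisymm (h ▸ (hP i).2) (hP i).1]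
  have hq : q = Ex n p (fval f) := Pr_eq_Ex _
  have hcorr : Ex n p (fun ω => fval f ω * ∑ i, a i * centered p (ω i)) =
      (∑ i, a i ^ 2) * Ex n p (fval f) := by
    rw [hf.Ex_fval_mul_sum_centered, sum_mul, ← hq]
    exact sum_congr rfl fun i _ => by rw [hPq i]; ring
  calc q ≤ exp (-(1 / 2) * ∑ i, a i ^ 2) :=
        hq ▸ Ex_le_exp_of_Ex_mul_sum_centered hp0.le hp1.le (fval_nonneg f) (fval_le_one f) ha hcorr
    _ ≤ 2 * exp (-(1 / 2) * ∑ i, a i ^ 2) := by linarith [exp_pos (-(1 / 2) * ∑ i, a i ^ 2)]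

theorem stmt19 (n : ℕ) (p : ℝ) (hp0 : 0 < p) (hp1 : p < 1)
    (f : (Fin n → Bool) → Bool) (hf : Mono f)
    (hpos : 0 < Pr n p (fun ω => f ω = true)) :
    Pr n p (fun ω => f ω = true) ≤
      2 * Real.exp (-(1 / 2) *
        ∑ i : Fin n,
          ((1 - p) *
            (Pr n p (fun ω => i ∈ pivSet f ω ∧ f ω = true) /
              Pr n p (fun ω => f ω = true))) ^ 2) :=
  stmt19_general n p hp0 hp1 f hf
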